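/- arXiv:2507.20325 — 5 statements merged into one kernel-verified Lean document; each statement's English description precedes it below -/
import Mathlib

section
/- Let T₁, …, T_d be Cuntz isometries on a Hilbert space H, and suppose Sᵢ = [[Tᵢ, Aᵢ],[Bᵢ, Cᵢ]] are operators on H ⊕ K such that ‖λ₁S₁ + … + λ_dS_d‖ ≤ 1 for all unit vectors λ ∈ ℂ^d. Then all Aᵢ = 0 and all Bᵢ = 0; i.e., the only such dilations of a Cuntz tuple are trivial. -/
/-!
For a unit vector `c`, `S_c = ∑ cᵢ Sᵢ` is a contraction whose compression `T_c = ∑ cᵢ Tᵢ` is an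
isometry. A contraction `S` compressing to an isometry `T` leaves `V H` invariant (`S V = V T`),
and the same argument applied to `S*` gives `T* V* S = V*`, so `T_c* V* S_c` vanishes on
`(V H)ᗮ`. That operator is a Hermitian form in `c` with coefficients `Tₖ* V* Sⱼ (1 - V V*)`;
vanishing on the unit sphere, it has all coefficients zero by polarization, and `∑ Tₖ Tₖ* = 1`
then kills `V* Sⱼ (1 - V V*)`.
-/

open ContinuousLinearMap
open scoped InnerProductSpace ComplexConjugate

section Compression
variable {𝕜 E F : Type*} [RCLike 𝕜] [NormedAddCommGroup E] [InnerProductSpace 𝕜 E]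
  [CompleteSpace E] [NormedAddCommGroup F] [InnerProductSpace 𝕜 F] [CompleteSpace F]
  {V : E →L[𝕜] F}

theorem norm_sq_eq_norm_adjoint_sq_add_norm_sq (hV : adjoint V ∘L V = 1) (y : F) :
    ‖y‖ ^ 2 = ‖adjoint V y‖ ^ 2 + ‖y - V (adjoint V y)‖ ^ 2 := by
  have hVV : adjoint V (V (adjoint V y)) = adjoint V y := by
    simpa using congr($hV (adjoint V y))
  have horth : ⟪V (adjoint V y), y - V (adjoint V y)⟫_𝕜 = 0 := by
    rw [← adjoint_inner_right, map_sub, hVV, sub_self, inner_zero_right]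
  rw [← (norm_map_iff_adjoint_comp_self V).2 hV (adjoint V y), sq, sq, sq,
    ← norm_add_sq_eq_norm_sq_add_norm_sq_of_inner_eq_zero _ _ horth, add_sub_cancel]

theorem apply_adjoint_apply_eq_of_norm_le (hV : adjoint V ∘L V = 1) {y : F}
    (hy : ‖y‖ ≤ ‖adjoint V y‖) : V (adjoint V y) = y := by
  have hpyth := norm_sq_eq_norm_adjoint_sq_add_norm_sq hV y
  have : ‖y - V (adjoint V y)‖ = 0 := by
    nlinarith [norm_nonneg y, norm_nonneg (y - V (adjoint V y))]
  exact (sub_eq_zero.1 (norm_eq_zero.1 this)).symm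

variable {S : F →L[𝕜] F} {T : E →L[𝕜] E}

theorem comp_eq_comp_of_isometric_compression (hV : adjoint V ∘L V = 1) (hS : ‖S‖ ≤ 1)
    (hT : adjoint V ∘L S ∘L V = T) (hTT : adjoint T ∘L T = 1) : S ∘L V = V ∘L T := by
  ext x
  rw [← hT, comp_apply]
  refine (apply_adjoint_apply_eq_of_norm_le hV ?_).symm
  calc ‖S (V x)‖ ≤ ‖V x‖ := by simpa using S.le_of_opNorm_le hS (V x)
    _ = ‖T x‖ := by
      rw [(norm_map_iff_adjoint_comp_self V).2 hV, (norm_map_iff_adjoint_comp_self T).2 hTT]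
    _ = ‖adjoint V (S (V x))‖ := by rw [← hT]; rfl

theorem adjoint_comp_adjoint_comp_of_isometric_compression (hV : adjoint V ∘L V = 1)
    (hS : ‖S‖ ≤ 1) (hT : adjoint V ∘L S ∘L V = T) (hTT : adjoint T ∘L T = 1) :
    adjoint T ∘L adjoint V ∘L S = adjoint V := by
  have hTadj : adjoint T = adjoint V ∘L adjoint S ∘L V := by
    rw [← hT]; simp [adjoint_comp, comp_assoc]
  have hcol : adjoint S ∘L V ∘L T = V := by
    ext x
    have hx : adjoint V (adjoint S (V (T x))) = x := by
      simpa [hTadj] using congr($hTT x)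
    rw [comp_apply, comp_apply]
    conv_rhs => rw [← hx]
    refine (apply_adjoint_apply_eq_of_norm_le hV ?_).symm
    rw [hx]
    calc ‖adjoint S (V (T x))‖ ≤ ‖V (T x)‖ := by
          simpa using (adjoint S).le_of_opNorm_le (c := 1) (by rwa [LinearIsometryEquiv.norm_map])
            (V (T x))
      _ = ‖x‖ := by
        rw [(norm_map_iff_adjoint_comp_self V).2 hV, (norm_map_iff_adjoint_comp_self T).2 hTT]
  simpa [adjoint_comp, comp_assoc] using congr(adjoint $hcol)

end Compression

section Polarization
variable {ι M : Type*} [Fintype ι] [AddCommGroup M] [Module ℂ M]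

def sesqQuadForm (X : ι → ι → M) (c : ι → ℂ) : M := ∑ k, ∑ l, (conj (c k) * c l) • X k l

theorem sesqQuadForm_smul (X : ι → ι → M) (a : ℂ) (c : ι → ℂ) :
    sesqQuadForm X (a • c) = (conj a * a) • sesqQuadForm X c := by
  simp only [sesqQuadForm, Finset.smul_sum, smul_smul, Pi.smul_apply, smul_eq_mul, map_mul]
  congr! 3 with k _ l _
  ring

theorem sesqQuadForm_eq_zero_of_forall_norm_eq_one {X : ι → ι → M}
    (h : ∀ c : ι → ℂ, ∑ i, ‖c i‖ ^ 2 = 1 → sesqQuadForm X c = 0) (c : ι → ℂ) :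
    sesqQuadForm X c = 0 := by
  set N := ∑ i, ‖c i‖ ^ 2
  obtain hN | hN := (Finset.sum_nonneg fun i _ => sq_nonneg ‖c i‖ : 0 ≤ N).eq_or_lt
  · have hc : c = 0 := funext fun i => by
      simpa using (Finset.sum_eq_zero_iff_of_nonneg fun i _ => sq_nonneg ‖c i‖).1 hN.symm i
    simp [hc, sesqQuadForm]
  · set a : ℂ := (((√N)⁻¹ : ℝ) : ℂ)
    have ha : conj a * a ≠ 0 := by
      simp [a, Real.sqrt_ne_zero', show 0 < N from hN]
    refine (smul_eq_zero.1 ((sesqQuadForm_smul X a c).symm.trans (h _ ?_))).resolve_left ha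
    simp only [Pi.smul_apply, smul_eq_mul, norm_mul, mul_pow, ← Finset.mul_sum, a,
      Complex.norm_real, norm_inv, Real.norm_eq_abs, abs_of_nonneg (Real.sqrt_nonneg N)]
    rw [inv_pow, Real.sq_sqrt hN.le, inv_mul_cancel₀ hN.ne']

variable [DecidableEq ι]

theorem sesqQuadForm_single_add_single (X : ι → ι → M) (i j : ι) (a : ℂ) :
    sesqQuadForm X (Pi.single i 1 + Pi.single j a) =
      X i i + a • X i j + conj a • X j i + (conj a * a) • X j j := by
  have hsingle : ∀ (i j : ι) (a b : ℂ),
      ∑ k, ∑ l, (conj ((Pi.single i a : ι → ℂ) k) * (Pi.single j b : ι → ℂ) l) • X k l =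
        (conj a * b) • X i j := by
    intro i j a b
    simp [Pi.single_apply, apply_ite conj, ite_smul]
  simp only [sesqQuadForm, Pi.add_apply, map_add, add_mul, mul_add, add_smul,
    Finset.sum_add_distrib, hsingle, map_one, one_mul, mul_one, one_smul]
  abel

theorem eq_zero_of_sesqQuadForm_eq_zero {X : ι → ι → M}
    (h : ∀ c : ι → ℂ, ∑ i, ‖c i‖ ^ 2 = 1 → sesqQuadForm X c = 0) (i j : ι) : X i j = 0 := by
  have hQ := sesqQuadForm_eq_zero_of_forall_norm_eq_one h
  have hdiag : ∀ k, X k k = 0 := fun k => by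
    have := hQ (Pi.single k 1 + Pi.single k 0)
    rw [sesqQuadForm_single_add_single] at this
    simpa using this
  have hre := hQ (Pi.single i 1 + Pi.single j 1)
  have him := hQ (Pi.single i 1 + Pi.single j Complex.I)
  rw [sesqQuadForm_single_add_single] at hre him
  simp only [hdiag, smul_zero, add_zero, zero_add, one_smul, map_one, Complex.conj_I] at hre him
  have : (2 : ℂ) • X i j = 0 := by
    linear_combination (norm := skip) hre - Complex.I • him
    simp only [smul_add, smul_smul, mul_neg, Complex.I_mul_I]
    module
  simpa using this

end Polarization

section LinearCombination
variable {𝕜 ι E F G : Type*} [RCLike 𝕜] [Fintype ι]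
  [NormedAddCommGroup E] [InnerProductSpace 𝕜 E] [CompleteSpace E]
  [NormedAddCommGroup F] [InnerProductSpace 𝕜 F]
  [NormedAddCommGroup G] [InnerProductSpace 𝕜 G] [CompleteSpace G]

theorem adjoint_sum_smul_comp_sum_smul (c : ι → 𝕜) (A : ι → E →L[𝕜] G) (B : ι → F →L[𝕜] G) :
    adjoint (∑ i, c i • A i) ∘L (∑ j, c j • B j) =
      ∑ i, ∑ j, (conj (c i) * c j) • (adjoint (A i) ∘L B j) := by
  simp only [map_sum, map_smulₛₗ, finsetSum_comp, comp_finsetSum, smul_comp, comp_smul,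
    Finset.smul_sum, smul_smul]
  rw [Finset.sum_comm]
  simp only [mul_comm]

theorem adjoint_sum_smul_comp_sum_smul_eq_one [DecidableEq ι] {T : ι → E →L[𝕜] G}
    (hT : ∀ i j, adjoint (T i) ∘L T j = if i = j then 1 else 0) {c : ι → 𝕜}
    (hc : ∑ i, ‖c i‖ ^ 2 = 1) :
    adjoint (∑ i, c i • T i) ∘L (∑ i, c i • T i) = 1 := by
  have hc' : ∑ i, ((‖c i‖ : 𝕜) ^ 2) = 1 := by exact_mod_cast hc
  simp only [adjoint_sum_smul_comp_sum_smul, hT, smul_ite, smul_zero, Finset.sum_ite_eq,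
    Finset.mem_univ, if_true, ← Finset.sum_smul, RCLike.conj_mul, hc', one_smul]

end LinearCombination

section CuntzDilation
variable {H H' : Type*} [NormedAddCommGroup H] [InnerProductSpace ℂ H] [CompleteSpace H]
  [NormedAddCommGroup H'] [InnerProductSpace ℂ H'] [CompleteSpace H']
  {d : ℕ} {T : Fin d → H →L[ℂ] H} {V : H →L[ℂ] H'} {S : Fin d → H' →L[ℂ] H'}

theorem adjoint_comp_adjoint_comp_comp_orthogonal_eq_zero
    (hTT : ∀ i j, adjoint (T i) ∘L T j = if i = j then 1 else 0)
    (hV : adjoint V ∘L V = 1) (hcomp : ∀ i, adjoint V ∘L S i ∘L V = T i)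
    (hnorm : ∀ lam : Fin d → ℂ, ∑ i, ‖lam i‖ ^ 2 = 1 → ‖∑ i, lam i • S i‖ ≤ 1) (k j : Fin d) :
    adjoint (T k) ∘L adjoint V ∘L S j ∘L (1 - V ∘L adjoint V) = 0 := by
  refine eq_zero_of_sesqQuadForm_eq_zero
    (X := fun k j => adjoint (T k) ∘L adjoint V ∘L S j ∘L (1 - V ∘L adjoint V))
    (fun c hc => ?_) k j
  have hcompSum : adjoint V ∘L (∑ i, c i • S i) ∘L V = ∑ i, c i • T i := by
    simp only [comp_finsetSum, finsetSum_comp, comp_smul, smul_comp, hcomp]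
  have hrow := adjoint_comp_adjoint_comp_of_isometric_compression hV (hnorm c hc) hcompSum
    (adjoint_sum_smul_comp_sum_smul_eq_one hTT hc)
  have hfactor : ∑ j, c j • (adjoint V ∘L S j ∘L (1 - V ∘L adjoint V)) =
      adjoint V ∘L (∑ j, c j • S j) ∘L (1 - V ∘L adjoint V) := by
    simp only [comp_finsetSum, finsetSum_comp, comp_smul, smul_comp]
  rw [sesqQuadForm, ← adjoint_sum_smul_comp_sum_smul, hfactor, ← comp_assoc, ← comp_assoc,
    comp_assoc _ (adjoint V), hrow, comp_sub, ← comp_assoc, hV]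
  simp [one_def]

end CuntzDilation

/-- Cuntz tuples are maximal: if `(S₁,…,S_d)` is a tuple of operators on a larger Hilbert
space `H'` whose compressions to (the isometric copy of) `H` form a Cuntz tuple
`(T₁,…,T_d)`, and every unit-vector linear combination of the `Sᵢ` is a contraction, then
the off-diagonal corners of every `Sᵢ` vanish, i.e. the dilation is trivial. -/
theorem cuntz_dilations_are_trivial
    (H : Type*) [NormedAddCommGroup H] [InnerProductSpace ℂ H] [CompleteSpace H]
    (H' : Type*) [NormedAddCommGroup H'] [InnerProductSpace ℂ H'] [CompleteSpace H']
    (d : ℕ) (T : Fin d → H →L[ℂ] H)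
    (hTT : ∀ i j, adjoint (T i) ∘L T j = if i = j then 1 else 0)
    (hsum : ∑ i, T i ∘L adjoint (T i) = 1)
    (V : H →L[ℂ] H') (hV : adjoint V ∘L V = 1)
    (S : Fin d → H' →L[ℂ] H')
    (hcomp : ∀ i, adjoint V ∘L S i ∘L V = T i)
    (hnorm : ∀ lam : Fin d → ℂ, ∑ i, ‖lam i‖ ^ 2 = 1 → ‖∑ i, lam i • S i‖ ≤ 1) :
    ∀ i, adjoint V ∘L S i ∘L (1 - V ∘L adjoint V) = 0 ∧
      (1 - V ∘L adjoint V) ∘L S i ∘L V = 0 := by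
  intro i
  constructor
  · calc adjoint V ∘L S i ∘L (1 - V ∘L adjoint V)
        = (∑ k, T k ∘L adjoint (T k)) ∘L adjoint V ∘L S i ∘L (1 - V ∘L adjoint V) := by
          rw [hsum]; exact (id_comp _).symm
      _ = 0 := by
        simp only [finsetSum_comp, comp_assoc,
          adjoint_comp_adjoint_comp_comp_orthogonal_eq_zero hTT hV hcomp hnorm, comp_zero,
          Finset.sum_const_zero]
  · have hunit : ∑ k, ‖(Pi.single i 1 : Fin d → ℂ) k‖ ^ 2 = 1 := by
      rw [Finset.sum_eq_single i (fun k _ hk => by simp [hk]) (by simp)]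
      simp
    rw [comp_eq_comp_of_isometric_compression hV (by simpa using hnorm _ hunit) (hcomp i)
      (by simpa using hTT i i), ← comp_assoc, sub_comp, comp_assoc, hV]
    simp [one_def]
end

section
/- Let X ∈ B_g(n) with S = Σⱼ Xⱼ², V = ker(I - S), W = V⊥, and suppose S ≠ I. If there exist vectors w₁, …, w_g ∈ W, not all zero, with Σⱼ Xⱼwⱼ ∈ W, then X admits a nontrivial dilation in the matrix ball B_g (i.e., X is not an Arveson extreme point of B_g). -/
/-!
Put `T = 1 - Σⱼ Xⱼ²` and dilate `Xⱼ` by `aⱼ = ε wⱼ`, `bⱼ = 0`. For `x = (v, t)` the defect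
`‖x‖² - Σⱼ ‖Yⱼ x‖²` equals `⟪T v, v⟫ + |t|²` minus a cross term of order `ε` involving
`⟪v, Σⱼ Xⱼ wⱼ⟫` and terms of order `ε²` involving `|t|²` and `|⟪wⱼ, v⟫|²`. Orthogonality to
`ker T` puts `wⱼ` and `Σⱼ Xⱼ wⱼ` in the range of `T`, so by the Cauchy–Schwarz inequality for
the semi-inner product `⟪T ·, ·⟫` these inner products are bounded by multiples of
`⟪T v, v⟫^(1/2)`; hence for small `ε` the defect stays nonnegative.
-/

open Matrix
open scoped ComplexOrder InnerProductSpace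

namespace ContinuousLinearMap

variable {𝕜 E ι : Type*} [RCLike 𝕜] [NormedAddCommGroup E] [InnerProductSpace 𝕜 E] [Fintype ι]

open RCLike

theorem IsPositive.norm_inner_sq_le {D : E →L[𝕜] E} (hD : D.IsPositive) (x y : E) :
    ‖⟪D x, y⟫_𝕜‖ ^ 2 ≤ re ⟪D x, x⟫_𝕜 * re ⟪D y, y⟫_𝕜 := by
  let c : PreInnerProductSpace.Core 𝕜 E :=
    { inner x y := ⟪D x, y⟫_𝕜
      conj_inner_symm x y := by
        rw [inner_conj_symm]; exact (hD.inner_left_eq_inner_right x y).symm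
      re_inner_nonneg := hD.re_inner_nonneg_left
      add_left x y z := by simp [inner_add_left]
      smul_left x y r := by simp [inner_smul_left] }
  have hyx : ‖⟪D y, x⟫_𝕜‖ = ‖⟪D x, y⟫_𝕜‖ := by
    rw [hD.inner_left_eq_inner_right, ← inner_conj_symm, RCLike.norm_conj]
  rw [sq]
  nth_rewrite 2 [← hyx]
  exact InnerProductSpace.Core.inner_mul_inner_self_le (c := c) x y

def defect (A : ι → E →L[𝕜] E) : E →L[𝕜] E := 1 - ∑ j, A j * A j

theorem re_inner_defect_self {A : ι → E →L[𝕜] E} (hA : ∀ j, (A j).IsSymmetric)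
    (v : E) : re ⟪defect A v, v⟫_𝕜 = ‖v‖ ^ 2 - ∑ j, ‖A j v‖ ^ 2 := by
  have hAA (j : ι) : ⟪(A j * A j) v, v⟫_𝕜 = ⟪A j v, A j v⟫_𝕜 := hA j (A j v) v
  simp only [defect, _root_.sub_apply, one_apply_eq_self, _root_.sum_apply, inner_sub_left,
    sum_inner, hAA, map_sub, map_sum, inner_self_eq_norm_sq]

theorem isSymmetric_defect {A : ι → E →L[𝕜] E} (hA : ∀ j, (A j).IsSymmetric) :
    (defect A).IsSymmetric := by
  intro x y
  have hl (j : ι) : ⟪(A j * A j) x, y⟫_𝕜 = ⟪A j x, A j y⟫_𝕜 := hA j _ y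
  have hr (j : ι) : ⟪x, (A j * A j) y⟫_𝕜 = ⟪A j x, A j y⟫_𝕜 := (hA j x _).symm
  simp only [coe_coe, defect, _root_.sub_apply, one_apply_eq_self, _root_.sum_apply,
    inner_sub_left, inner_sub_right, sum_inner, inner_sum, hl, hr]

theorem isPositive_defect_iff {A : ι → E →L[𝕜] E} (hA : ∀ j, (A j).IsSymmetric) :
    (defect A).IsPositive ↔ ∀ v, ∑ j, ‖A j v‖ ^ 2 ≤ ‖v‖ ^ 2 := by
  simp only [IsPositive, isSymmetric_defect hA, true_and, reApplyInnerSelf,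
    re_inner_defect_self hA, sub_nonneg]

theorem sum_norm_add_smul_sq {A : ι → E →L[𝕜] E} (hA : ∀ j, (A j).IsSymmetric)
    (v : E) (w : ι → E) (s : 𝕜) :
    ∑ j, ‖A j v + s • w j‖ ^ 2 = ∑ j, ‖A j v‖ ^ 2 + 2 * re (s * ⟪v, ∑ j, A j (w j)⟫_𝕜)
      + ‖s‖ ^ 2 * ∑ j, ‖w j‖ ^ 2 := by
  have hA' (j : ι) (x y : E) : ⟪A j x, y⟫_𝕜 = ⟪x, A j y⟫_𝕜 := hA j x y
  simp only [@norm_add_sq 𝕜, hA', map_smul, inner_smul_right, norm_smul, inner_sum,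
    Finset.sum_add_distrib, Finset.mul_sum, map_sum, mul_pow]

theorem sum_norm_sq_dilation_le {A : ι → E →L[𝕜] E} (hA : ∀ j, (A j).IsSymmetric)
    (hD : (defect A).IsPositive) {w u : ι → E} {z : E} (hz : defect A z = ∑ j, A j (w j))
    (hu : ∀ j, defect A (u j) = w j) {ε : ℝ} (hε : 0 ≤ ε) (v : E) (t : 𝕜) :
    ∑ j, (‖A j v + t • (ε : 𝕜) • w j‖ ^ 2 + ‖⟪(ε : 𝕜) • w j, v⟫_𝕜‖ ^ 2) ≤
      ‖v‖ ^ 2 + ε * ‖t‖ ^ 2 - (1 - ε * re ⟪defect A z, z⟫_𝕜) * re ⟪defect A v, v⟫_𝕜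
        + ε ^ 2 * (‖t‖ ^ 2 * ∑ j, ‖w j‖ ^ 2
          + (∑ j, re ⟪defect A (u j), u j⟫_𝕜) * re ⟪defect A v, v⟫_𝕜) := by
  have hnε : ‖(ε : 𝕜)‖ = ε := by simp [hε]
  set c := ‖⟪defect A z, v⟫_𝕜‖
  have hcross : re (t * ε * ⟪v, ∑ j, A j (w j)⟫_𝕜) ≤ ε * ‖t‖ * c :=
    calc re (t * ε * ⟪v, ∑ j, A j (w j)⟫_𝕜) ≤ ‖t * ε * ⟪v, ∑ j, A j (w j)⟫_𝕜‖ := re_le_norm _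
      _ = ε * ‖t‖ * c := by rw [← hz, norm_mul, norm_mul, hnε, norm_inner_symm]; ring
  have hc : c ^ 2 ≤ re ⟪defect A z, z⟫_𝕜 * re ⟪defect A v, v⟫_𝕜 := hD.norm_inner_sq_le z v
  have hwv : ∑ j, ‖⟪(ε : 𝕜) • w j, v⟫_𝕜‖ ^ 2 ≤
      ε ^ 2 * ((∑ j, re ⟪defect A (u j), u j⟫_𝕜) * re ⟪defect A v, v⟫_𝕜) := by
    rw [Finset.sum_mul, Finset.mul_sum]
    refine Finset.sum_le_sum fun j _ => ?_
    rw [inner_smul_left, norm_mul, RCLike.norm_conj, hnε, mul_pow, ← hu j]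
    exact mul_le_mul_of_nonneg_left (hD.norm_inner_sq_le (u j) v) (by positivity)
  rw [Finset.sum_add_distrib]
  simp only [smul_smul]
  rw [sum_norm_add_smul_sq hA, norm_mul, hnε]
  have hq := re_inner_defect_self hA v
  -- AM-GM on the cross term: `2 ε ‖t‖ c ≤ ε ‖t‖ ^ 2 + ε c ^ 2`
  nlinarith [mul_nonneg hε (sq_nonneg (‖t‖ - c)), mul_le_mul_of_nonneg_left hc hε]

theorem exists_pos_sum_norm_sq_dilation_le {A : ι → E →L[𝕜] E} (hA : ∀ j, (A j).IsSymmetric)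
    (hD : (defect A).IsPositive) {w : ι → E} (hw : ∀ j, w j ∈ (defect A).range)
    (hAw : ∑ j, A j (w j) ∈ (defect A).range) :
    ∃ ε : ℝ, 0 < ε ∧ ∀ (v : E) (t : 𝕜),
      ∑ j, (‖A j v + t • (ε : 𝕜) • w j‖ ^ 2 + ‖⟪(ε : 𝕜) • w j, v⟫_𝕜‖ ^ 2) ≤ ‖v‖ ^ 2 + ‖t‖ ^ 2 := by
  obtain ⟨z, hz : defect A z = _⟩ := hAw
  choose u hu using hw
  set P := re ⟪defect A z, z⟫_𝕜
  set C₀ := ∑ j, ‖w j‖ ^ 2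
  set C₁ := ∑ j, re ⟪defect A (u j), u j⟫_𝕜
  have hP : 0 ≤ P := hD.re_inner_nonneg_left z
  have hC₀ : 0 ≤ C₀ := by positivity
  have hC₁ : 0 ≤ C₁ := Finset.sum_nonneg fun j _ => hD.re_inner_nonneg_left (u j)
  set ε := (1 + P + C₀ + C₁)⁻¹
  have hε₀ : 0 < ε := by positivity
  have hε : ε * (1 + P + C₀ + C₁) = 1 := inv_mul_cancel₀ (by positivity)
  refine ⟨ε, hε₀, fun v t => (sum_norm_sq_dilation_le hA hD hz hu hε₀.le v t).trans ?_⟩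
  have hq : 0 ≤ re ⟪defect A v, v⟫_𝕜 := hD.re_inner_nonneg_left v
  have hε₁ : ε ≤ 1 := by nlinarith
  have ht : ε * ‖t‖ ^ 2 + ε ^ 2 * (‖t‖ ^ 2 * C₀) ≤ ‖t‖ ^ 2 := by
    nlinarith [mul_nonneg (mul_nonneg hε₀.le (sq_nonneg ‖t‖)) (add_nonneg hP hC₁),
      mul_nonneg (mul_nonneg (mul_nonneg hε₀.le (sq_nonneg ‖t‖)) hC₀) (sub_nonneg.2 hε₁)]
  have hv : ε * P * re ⟪defect A v, v⟫_𝕜 + ε ^ 2 * (C₁ * re ⟪defect A v, v⟫_𝕜) ≤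
      re ⟪defect A v, v⟫_𝕜 := by
    nlinarith [mul_nonneg (mul_nonneg hε₀.le hq) (add_nonneg zero_le_one hC₀),
      mul_nonneg (mul_nonneg (mul_nonneg hε₀.le hC₁) hq) (sub_nonneg.2 hε₁)]
  linarith

end ContinuousLinearMap

namespace Matrix

def dilation {m : Type*} (X : Matrix m m ℂ) (a : m → ℂ) (b : ℝ) :
    Matrix (m ⊕ Unit) (m ⊕ Unit) ℂ :=
  fromBlocks X (of fun i _ => a i) (of fun _ i => star (a i)) (of fun _ _ => (b : ℂ))

theorem IsHermitian.dilation {m : Type*} {X : Matrix m m ℂ} (hX : X.IsHermitian) (a : m → ℂ)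
    (b : ℝ) : (dilation X a b).IsHermitian := by
  refine hX.fromBlocks ?_ ?_
  · ext; simp
  · ext; simp

theorem dilation_mulVec_sumElim {m : Type*} [Fintype m] (X : Matrix m m ℂ) (a v : m → ℂ) (b : ℝ)
    (t : ℂ) : dilation X a b *ᵥ Sum.elim v (fun _ => t) =
      Sum.elim (X *ᵥ v + t • a) (fun _ => star a ⬝ᵥ v + b * t) := by
  ext (i | _) <;> simp [dilation, mulVec, dotProduct, mul_comm]

variable {m ι : Type*} [Fintype m] [DecidableEq m] [Fintype ι]

theorem posSemidef_iff_isPositive_toEuclideanCLM {M : Matrix m m ℂ} :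
    M.PosSemidef ↔ (toEuclideanCLM (𝕜 := ℂ) M).IsPositive := by
  rw [← ContinuousLinearMap.isPositive_toLinearMap_iff, coe_toEuclideanCLM_eq_toEuclideanLin,
    isPositive_toEuclideanLin_iff]

theorem isSymmetric_toEuclideanCLM {M : Matrix m m ℂ} (hM : M.IsHermitian) :
    (toEuclideanCLM (𝕜 := ℂ) M).IsSymmetric := by
  rw [coe_toEuclideanCLM_eq_toEuclideanLin]
  exact isSymmetric_toEuclideanLin_iff.mpr hM

theorem toEuclideanCLM_one_sub_sum_sq (Y : ι → Matrix m m ℂ) :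
    toEuclideanCLM (𝕜 := ℂ) (1 - ∑ j, Y j ^ 2) =
      ContinuousLinearMap.defect fun j => toEuclideanCLM (𝕜 := ℂ) (Y j) := by
  simp [ContinuousLinearMap.defect, sq]

theorem posSemidef_one_sub_sum_sq_iff {Y : ι → Matrix m m ℂ} (hY : ∀ j, (Y j).IsHermitian) :
    (1 - ∑ j, Y j ^ 2).PosSemidef ↔
      ∀ x : EuclideanSpace ℂ m, ∑ j, ‖toEuclideanCLM (𝕜 := ℂ) (Y j) x‖ ^ 2 ≤ ‖x‖ ^ 2 := by
  rw [posSemidef_iff_isPositive_toEuclideanCLM, toEuclideanCLM_one_sub_sum_sq,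
    ContinuousLinearMap.isPositive_defect_iff fun j => isSymmetric_toEuclideanCLM (hY j)]

theorem IsHermitian.exists_mulVec_eq {T : Matrix m m ℂ} (hT : T.IsHermitian) {w : m → ℂ}
    (hw : ∀ v, T *ᵥ v = 0 → star v ⬝ᵥ w = 0) : ∃ z, T *ᵥ z = w := by
  have hmem : WithLp.toLp 2 w ∈ LinearMap.range (toEuclideanLin T) := by
    rw [← Submodule.orthogonal_orthogonal (LinearMap.range _),
      (isSymmetric_toEuclideanLin_iff.mpr hT).orthogonal_range]
    intro u hu
    rw [EuclideanSpace.inner_eq_star_dotProduct, dotProduct_comm]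
    exact hw _ (congrArg WithLp.ofLp hu)
  obtain ⟨z, hz⟩ := hmem
  exact ⟨WithLp.ofLp z, congrArg WithLp.ofLp hz⟩

theorem posSemidef_one_sub_sum_sq_dilation {X : ι → Matrix m m ℂ} (hX : ∀ j, (X j).IsHermitian)
    {a : ι → m → ℂ} (h : ∀ (v : EuclideanSpace ℂ m) (t : ℂ),
      ∑ j, (‖toEuclideanCLM (𝕜 := ℂ) (X j) v + t • WithLp.toLp 2 (a j)‖ ^ 2
        + ‖⟪WithLp.toLp 2 (a j), v⟫_ℂ‖ ^ 2) ≤ ‖v‖ ^ 2 + ‖t‖ ^ 2) :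
    (1 - ∑ j, dilation (X j) (a j) 0 ^ 2).PosSemidef := by
  rw [posSemidef_one_sub_sum_sq_iff fun j => (hX j).dilation (a j) 0]
  intro x
  obtain ⟨v, t, rfl⟩ : ∃ v t, x = WithLp.toLp 2 (Sum.elim v fun _ : Unit => t) :=
    ⟨fun i => x (.inl i), x (.inr ()), by ext (i | _) <;> rfl⟩
  simpa [dilation_mulVec_sumElim, EuclideanSpace.norm_sq_eq, Fintype.sum_sum_type,
    EuclideanSpace.inner_eq_star_dotProduct, dotProduct_comm] using h (WithLp.toLp 2 v) t

end Matrix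

theorem matrix_ball_not_arveson_extreme_general (g n : ℕ)
    (X : Fin g → Matrix (Fin n) (Fin n) ℂ)
    (hX : ∀ j, (X j).IsHermitian)
    (hball : (1 - ∑ j, X j ^ 2).PosSemidef)
    (w : Fin g → Fin n → ℂ) (hw : w ≠ 0)
    (hwW : ∀ j (v : Fin n → ℂ), (1 - ∑ j', X j' ^ 2) *ᵥ v = 0 → star v ⬝ᵥ w j = 0)
    (hXw : ∀ v : Fin n → ℂ, (1 - ∑ j', X j' ^ 2) *ᵥ v = 0 →
      star v ⬝ᵥ (∑ j, X j *ᵥ w j) = 0) :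
    ∃ (a : Fin g → Fin n → ℂ) (b : Fin g → ℝ), a ≠ 0 ∧
      (1 - ∑ j, (Matrix.fromBlocks (X j)
        (Matrix.of fun i _ => a j i) (Matrix.of fun _ i => star (a j i))
        (Matrix.of fun _ _ => (b j : ℂ)) : Matrix (Fin n ⊕ Unit) (Fin n ⊕ Unit) ℂ) ^ 2).PosSemidef := by
  set A := fun j => toEuclideanCLM (𝕜 := ℂ) (X j)
  have hA (j : Fin g) : (A j).IsSymmetric := isSymmetric_toEuclideanCLM (hX j)
  have hD : (ContinuousLinearMap.defect A).IsPositive := by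
    rw [← toEuclideanCLM_one_sub_sum_sq, ← posSemidef_iff_isPositive_toEuclideanCLM]
    exact hball
  have hrange {u : Fin n → ℂ} (hu : ∀ v, (1 - ∑ j, X j ^ 2) *ᵥ v = 0 → star v ⬝ᵥ u = 0) :
      WithLp.toLp 2 u ∈ (ContinuousLinearMap.defect A).range := by
    obtain ⟨z, hz⟩ := hball.isHermitian.exists_mulVec_eq hu
    exact ⟨WithLp.toLp 2 z, by rw [← toEuclideanCLM_one_sub_sum_sq]; exact congrArg _ hz⟩
  obtain ⟨ε, hε, hbound⟩ := ContinuousLinearMap.exists_pos_sum_norm_sq_dilation_le hA hD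
    (fun j => hrange (hwW j)) (by simpa [A] using hrange hXw)
  refine ⟨fun j => (ε : ℂ) • w j, 0, smul_ne_zero (by exact_mod_cast hε.ne') hw, ?_⟩
  exact posSemidef_one_sub_sum_sq_dilation hX hbound

/-- If `X` is in the matrix ball with `S = Σⱼ Xⱼ² ≠ I`, and there are vectors
`w₁,…,w_g`, not all zero, orthogonal to `V = ker(I - S)` with `Σⱼ Xⱼwⱼ` also orthogonal
to `V`, then `X` admits a nontrivial one-row dilation in the matrix ball, i.e. `X` is not
an Arveson extreme point of the matrix ball. -/
theorem matrix_ball_not_arveson_extreme (g n : ℕ)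
    (X : Fin g → Matrix (Fin n) (Fin n) ℂ)
    (hX : ∀ j, (X j).IsHermitian)
    (hball : (1 - ∑ j, X j ^ 2).PosSemidef)
    (hSne : ∑ j, X j ^ 2 ≠ 1)
    (w : Fin g → Fin n → ℂ) (hw : w ≠ 0)
    (hwW : ∀ j (v : Fin n → ℂ), (1 - ∑ j', X j' ^ 2) *ᵥ v = 0 → star v ⬝ᵥ w j = 0)
    (hXw : ∀ v : Fin n → ℂ, (1 - ∑ j', X j' ^ 2) *ᵥ v = 0 →
      star v ⬝ᵥ (∑ j, X j *ᵥ w j) = 0) :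
    ∃ (a : Fin g → Fin n → ℂ) (b : Fin g → ℝ), a ≠ 0 ∧
      (1 - ∑ j, (Matrix.fromBlocks (X j)
        (Matrix.of fun i _ => a j i) (Matrix.of fun _ i => star (a j i))
        (Matrix.of fun _ _ => (b j : ℂ)) : Matrix (Fin n ⊕ Unit) (Fin n ⊕ Unit) ℂ) ^ 2).PosSemidef :=
  matrix_ball_not_arveson_extreme_general g n X hX hball w hw hwW hXw
end

section
/- Let K₁, …, K_ℓ be levelwise closed and bounded matrix convex sets of g-tuples of self-adjoint complex matrices, and let K = mconv(K₁ ∪ … ∪ K_ℓ). Then for every n, every X ∈ K(n) is a matrix convex combination of elements of (K₁ ∪ … ∪ K_ℓ)(n) at level at most n; i.e., the generating points can be compressed to matrix size ≤ n. -/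
open Matrix

/-- A levelwise family of sets of `g`-tuples of matrices is matrix convex if it is closed
under matrix convex combinations `Σᵢ Vᵢᴴ X⁽ⁱ⁾ Vᵢ` with `Σᵢ Vᵢᴴ Vᵢ = I`. -/
def IsMatrixConvex (g : ℕ) (K : ∀ n : ℕ, Set (Fin g → Matrix (Fin n) (Fin n) ℂ)) : Prop :=
  ∀ (n m : ℕ) (sz : Fin m → ℕ)
    (X : ∀ i : Fin m, Fin g → Matrix (Fin (sz i)) (Fin (sz i)) ℂ)
    (V : ∀ i : Fin m, Matrix (Fin (sz i)) (Fin n) ℂ),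
    (∀ i, X i ∈ K (sz i)) → (∑ i, (V i)ᴴ * V i = 1) →
    (fun j => ∑ i, (V i)ᴴ * X i j * V i) ∈ K n

/-- The matrix convex hull: the smallest matrix convex levelwise family containing `S`. -/
def matrixConvexHull (g : ℕ) (S : ∀ n : ℕ, Set (Fin g → Matrix (Fin n) (Fin n) ℂ)) :
    ∀ n : ℕ, Set (Fin g → Matrix (Fin n) (Fin n) ℂ) :=
  fun n => {X | ∀ K, IsMatrixConvex g K → (∀ m, S m ⊆ K m) → X ∈ K n}

/-! The matrix convex combinations of points of `S` form a matrix convex set (a combination of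
combinations is a combination, indexed by a sigma type), so they contain the hull. In a
combination `Σᵢ Vᵢᴴ Xᵢ Vᵢ` at level `n`, the column space of `Vᵢ` has dimension `qᵢ ≤ n`; if `Uᵢ`
is an isometry whose range contains it, then `Uᵢ Uᵢᴴ Vᵢ = Vᵢ`, and the term equals
`(Uᵢᴴ Vᵢ)ᴴ (Uᵢᴴ Xᵢ Uᵢ) (Uᵢᴴ Vᵢ)`, where the compression `Uᵢᴴ Xᵢ Uᵢ` has size `qᵢ` and stays in
each matrix convex set containing `Xᵢ`. -/

section Compression

variable {g : ℕ}

def IsClosedUnderCompression (g : ℕ) (S : ∀ n : ℕ, Set (Fin g → Matrix (Fin n) (Fin n) ℂ)) :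
    Prop :=
  ∀ (p q : ℕ) (Y : Fin g → Matrix (Fin p) (Fin p) ℂ) (U : Matrix (Fin p) (Fin q) ℂ),
    Y ∈ S p → Uᴴ * U = 1 → (fun j => Uᴴ * Y j * U) ∈ S q

theorem IsMatrixConvex.isClosedUnderCompression
    {K : ∀ n : ℕ, Set (Fin g → Matrix (Fin n) (Fin n) ℂ)} (hK : IsMatrixConvex g K) :
    IsClosedUnderCompression g K := by
  intro p q Y U hY hU
  simpa using hK q 1 (fun _ => p) (fun _ => Y) (fun _ => U) (fun _ => hY) (by simpa using hU)

theorem IsClosedUnderCompression.iUnion {ι : Type*}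
    {K : ι → ∀ n : ℕ, Set (Fin g → Matrix (Fin n) (Fin n) ℂ)}
    (hK : ∀ k, IsClosedUnderCompression g (K k)) :
    IsClosedUnderCompression g (fun n => ⋃ k, K k n) := by
  intro p q Y U hY hU
  obtain ⟨k, hk⟩ := Set.mem_iUnion.mp hY
  exact Set.mem_iUnion.mpr ⟨k, hK k p q Y U hk hU⟩

end Compression

theorem exists_isometry_mul_conjTranspose_mul_eq_self {p n : ℕ} (A : Matrix (Fin p) (Fin n) ℂ) :
    ∃ (q : ℕ) (U : Matrix (Fin p) (Fin q) ℂ), q ≤ n ∧ Uᴴ * U = 1 ∧ U * Uᴴ * A = A := by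
  classical
  -- the columns of `U` are an orthonormal basis of the column space of `A`
  let W := LinearMap.range (toEuclideanLin A)
  let b := stdOrthonormalBasis ℂ W
  let U : Matrix (Fin p) (Fin (Module.finrank ℂ W)) ℂ :=
    of fun i t => (b t : EuclideanSpace ℂ (Fin p)) i
  refine ⟨_, U, ?_, ?_, ?_⟩
  · simpa using LinearMap.finrank_range_le (toEuclideanLin A)
  · ext s t
    have h := orthonormal_iff_ite.mp b.orthonormal s t
    rw [Submodule.coe_inner, EuclideanSpace.inner_eq_star_dotProduct] at h
    simpa [U, Matrix.mul_apply, one_apply, dotProduct, mul_comm] using h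
  · ext i j
    have hcol : WithLp.toLp 2 (fun k => A k j) ∈ W :=
      ⟨EuclideanSpace.single j 1, by ext k; simp [toLpLin_apply]⟩
    have h := congr_arg (fun x : W => (x : EuclideanSpace ℂ (Fin p)) i) (b.sum_repr' ⟨_, hcol⟩)
    simp only [Submodule.coe_inner, EuclideanSpace.inner_eq_star_dotProduct] at h
    simpa [U, Matrix.mul_apply, dotProduct, Finset.mul_sum, mul_comm, mul_left_comm,
      Finset.sum_comm (γ := Fin p)] using h

theorem compression_conj_eq_conj_of_mul_conjTranspose_mul_eq {p q n : ℕ}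
    {A : Matrix (Fin p) (Fin n) ℂ} {U : Matrix (Fin p) (Fin q) ℂ} (h : U * Uᴴ * A = A)
    (Z : Matrix (Fin p) (Fin p) ℂ) :
    (Uᴴ * A)ᴴ * (Uᴴ * Z * U) * (Uᴴ * A) = Aᴴ * Z * A := by
  conv_rhs => rw [← h]
  simp only [conjTranspose_mul, conjTranspose_conjTranspose, Matrix.mul_assoc]

section Combinations

variable {g : ℕ} {S : ∀ n : ℕ, Set (Fin g → Matrix (Fin n) (Fin n) ℂ)}

def matrixCombinations (g : ℕ) (S : ∀ n : ℕ, Set (Fin g → Matrix (Fin n) (Fin n) ℂ)) (n : ℕ) :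
    Set (Fin g → Matrix (Fin n) (Fin n) ℂ) :=
  {X | ∃ (m : ℕ) (sz : Fin m → ℕ)
      (X' : ∀ i : Fin m, Fin g → Matrix (Fin (sz i)) (Fin (sz i)) ℂ)
      (V : ∀ i : Fin m, Matrix (Fin (sz i)) (Fin n) ℂ),
      (∀ i, X' i ∈ S (sz i)) ∧ (∑ i, (V i)ᴴ * V i = 1) ∧
      X = fun j => ∑ i, (V i)ᴴ * X' i j * V i}

theorem mem_matrixCombinations_of_fintype {n : ℕ} {ι : Type*} [Fintype ι] (sz : ι → ℕ)
    (X' : ∀ i : ι, Fin g → Matrix (Fin (sz i)) (Fin (sz i)) ℂ)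
    (V : ∀ i : ι, Matrix (Fin (sz i)) (Fin n) ℂ)
    (hX' : ∀ i, X' i ∈ S (sz i)) (hV : ∑ i, (V i)ᴴ * V i = 1) :
    (fun j => ∑ i, (V i)ᴴ * X' i j * V i) ∈ matrixCombinations g S n := by
  let e := (Fintype.equivFin ι).symm
  refine ⟨_, sz ∘ e, fun t => X' (e t), fun t => V (e t), fun t => hX' (e t), ?_, ?_⟩
  · rwa [e.sum_comp fun i => (V i)ᴴ * V i]
  · funext j
    exact (e.sum_comp fun i => (V i)ᴴ * X' i j * V i).symm

theorem subset_matrixCombinations (n : ℕ) : S n ⊆ matrixCombinations g S n := by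
  intro Y hY
  exact ⟨1, fun _ => n, fun _ => Y, fun _ => 1, fun _ => hY, by simp, by simp⟩

theorem sum_sigma_conj_mul_eq_conj_sum {n m : ℕ} {sz m' : Fin m → ℕ}
    {sz' : ∀ i, Fin (m' i) → ℕ}
    (W : ∀ i t, Matrix (Fin (sz' i t)) (Fin (sz i)) ℂ) (V : ∀ i, Matrix (Fin (sz i)) (Fin n) ℂ)
    (Z : ∀ i t, Matrix (Fin (sz' i t)) (Fin (sz' i t)) ℂ) :
    ∑ u : (i : Fin m) × Fin (m' i), (W u.1 u.2 * V u.1)ᴴ * Z u.1 u.2 * (W u.1 u.2 * V u.1) =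
      ∑ i, (V i)ᴴ * (∑ t, (W i t)ᴴ * Z i t * W i t) * V i := by
  simp only [Fintype.sum_sigma, Matrix.sum_mul, Matrix.mul_sum, conjTranspose_mul,
    Matrix.mul_assoc]

theorem isMatrixConvex_matrixCombinations : IsMatrixConvex g (matrixCombinations g S) := by
  intro n m sz X V hX hV
  choose m' sz' Y W hY hW hXY using hX
  have hcomb := mem_matrixCombinations_of_fintype (S := S)
    (fun u : (i : Fin m) × Fin (m' i) => sz' u.1 u.2) (fun u => Y u.1 u.2)
    (fun u => W u.1 u.2 * V u.1) (fun u => hY u.1 u.2)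
    (by rw [← hV]; simpa [hW] using sum_sigma_conj_mul_eq_conj_sum W V (fun _ _ => 1))
  have hsum : ∀ j, ∑ i, (V i)ᴴ * X i j * V i =
      ∑ u : (i : Fin m) × Fin (m' i), (W u.1 u.2 * V u.1)ᴴ * Y u.1 u.2 j * (W u.1 u.2 * V u.1) :=
    fun j => by rw [sum_sigma_conj_mul_eq_conj_sum W V fun i t => Y i t j]; simp only [hXY]
  simpa only [hsum] using hcomb

theorem matrixConvexHull_subset_matrixCombinations (n : ℕ) :
    matrixConvexHull g S n ⊆ matrixCombinations g S n :=
  fun _ hX => hX _ isMatrixConvex_matrixCombinations subset_matrixCombinations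

theorem IsClosedUnderCompression.exists_small_of_mem_matrixCombinations
    (hS : IsClosedUnderCompression g S) {n : ℕ} {X : Fin g → Matrix (Fin n) (Fin n) ℂ}
    (hX : X ∈ matrixCombinations g S n) :
    ∃ (m : ℕ) (sz : Fin m → ℕ)
      (X' : ∀ i : Fin m, Fin g → Matrix (Fin (sz i)) (Fin (sz i)) ℂ)
      (V : ∀ i : Fin m, Matrix (Fin (sz i)) (Fin n) ℂ),
      (∀ i, sz i ≤ n) ∧ (∀ i, X' i ∈ S (sz i)) ∧ (∑ i, (V i)ᴴ * V i = 1) ∧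
      X = fun j => ∑ i, (V i)ᴴ * X' i j * V i := by
  obtain ⟨m, sz, X', V, hX', hV, rfl⟩ := hX
  choose q U hq hU hUV using fun i => exists_isometry_mul_conjTranspose_mul_eq_self (V i)
  have hconj := fun i => compression_conj_eq_conj_of_mul_conjTranspose_mul_eq (hUV i)
  refine ⟨m, q, fun i j => (U i)ᴴ * X' i j * U i, fun i => (U i)ᴴ * V i, hq,
    fun i => hS _ _ _ _ (hX' i) (hU i), ?_, ?_⟩
  · have hnorm : ∀ i, ((U i)ᴴ * V i)ᴴ * ((U i)ᴴ * V i) = (V i)ᴴ * V i := fun i => by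
      simpa [hU i] using hconj i 1
    simpa only [hnorm] using hV
  · funext j
    simp only [hconj]

end Combinations

theorem mconv_union_combination_small_level_general (g ℓ : ℕ)
    (K : Fin ℓ → ∀ n : ℕ, Set (Fin g → Matrix (Fin n) (Fin n) ℂ))
    (hcvx : ∀ k, IsMatrixConvex g (K k))
    (n : ℕ) (X : Fin g → Matrix (Fin n) (Fin n) ℂ)
    (hX : X ∈ matrixConvexHull g (fun m => ⋃ k, K k m) n) :
    ∃ (m : ℕ) (sz : Fin m → ℕ)
      (X' : ∀ i : Fin m, Fin g → Matrix (Fin (sz i)) (Fin (sz i)) ℂ)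
      (V : ∀ i : Fin m, Matrix (Fin (sz i)) (Fin n) ℂ),
      (∀ i, sz i ≤ n) ∧ (∀ i, ∃ k, X' i ∈ K k (sz i)) ∧
      (∑ i, (V i)ᴴ * V i = 1) ∧
      X = fun j => ∑ i, (V i)ᴴ * X' i j * V i := by
  have hS : IsClosedUnderCompression g (fun m => ⋃ k, K k m) :=
    .iUnion fun k => (hcvx k).isClosedUnderCompression
  obtain ⟨m, sz, X', V, hsz, hX', hV, hXV⟩ :=
    hS.exists_small_of_mem_matrixCombinations (matrixConvexHull_subset_matrixCombinations n hX)
  exact ⟨m, sz, X', V, hsz, fun i => Set.mem_iUnion.mp (hX' i), hV, hXV⟩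

/-- Every element at level `n` of the matrix convex hull of a finite union of levelwise
closed and bounded matrix convex sets is a matrix convex combination of elements of the
union, taken at levels at most `n`. -/
theorem mconv_union_combination_small_level (g ℓ : ℕ)
    (K : Fin ℓ → ∀ n : ℕ, Set (Fin g → Matrix (Fin n) (Fin n) ℂ))
    (hcvx : ∀ k, IsMatrixConvex g (K k))
    (hclosed : ∀ k n, IsClosed (K k n))
    (hbdd : ∀ k n, ∃ C : ℝ, ∀ X ∈ K k n, ∀ j a b, ‖X j a b‖ ≤ C)
    (n : ℕ) (X : Fin g → Matrix (Fin n) (Fin n) ℂ)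
    (hX : X ∈ matrixConvexHull g (fun m => ⋃ k, K k m) n) :
    ∃ (m : ℕ) (sz : Fin m → ℕ)
      (X' : ∀ i : Fin m, Fin g → Matrix (Fin (sz i)) (Fin (sz i)) ℂ)
      (V : ∀ i : Fin m, Matrix (Fin (sz i)) (Fin n) ℂ),
      (∀ i, sz i ≤ n) ∧ (∀ i, ∃ k, X' i ∈ K k (sz i)) ∧
      (∑ i, (V i)ᴴ * V i = 1) ∧
      X = fun j => ∑ i, (V i)ᴴ * X' i j * V i :=
  mconv_union_combination_small_level_general g ℓ K hcvx n X hX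
end

section
/- Let K ⊆ ℝ^g be a bounded polyhedron containing 0 in its interior. Then K is the image under a coordinate projection of a simplex in ℝ^h (for some h ≥ g) containing 0 in its interior. -/
/-!
An extreme point of a polyhedron is determined by the set of constraints active at it, so a
bounded polyhedron `K` has finitely many extreme points and, by Krein–Milman, is the convex hull of
finitely many points `v₁, …, v_N`. Adding an affine basis `b₀, …, b_g` of `ℝ^g` lying inside `K`
does not change the hull, and as `0` is interior it is a convex combination `∑ wₖ uₖ` of these
`g + 1 + N` points with all weights positive. Lifting `bᵢ ↦ (bᵢ, 0)` and `vⱼ ↦ (vⱼ, eⱼ)` into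
`ℝ^g × ℝ^N` gives `g + N + 1` affinely independent points projecting onto the `uₖ`; after
translating by `-(0, (w_{vⱼ})ⱼ)`, the origin is their barycentre with the positive weights `w`,
hence an interior point of the simplex they span.
-/

open Set Filter Topology Module

section Polyhedron

variable {ι E : Type*} [AddCommGroup E] [Module ℝ E] (f : ι → E →ₗ[ℝ] ℝ) (b : ι → ℝ)

theorem convex_setOf_forall_le : Convex ℝ {x | ∀ i, f i x ≤ b i} := by
  simpa only [ofPred_forall] using convex_iInter fun i ↦ convex_halfSpace_le (f i).isLinear (b i)

/-- For small `t`, both `x ± t • (y - x)` keep the active constraints tight and the inactive ones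
strict, so `x` is the midpoint of a segment of the polyhedron along `y - x`. -/
theorem eq_of_mem_extremePoints_setOf_forall_le [Finite ι] {x y : E}
    (hx : x ∈ extremePoints ℝ {x | ∀ i, f i x ≤ b i})
    (hact : ∀ i, f i x = b i → f i y = b i) : y = x := by
  have hline : ∀ᶠ t in 𝓝 (0 : ℝ), ∀ i, f i (x + t • (y - x)) ≤ b i := by
    refine eventually_all.2 fun i ↦ ?_
    have hfi : ∀ t : ℝ, f i (x + t • (y - x)) = f i x + t * (f i y - f i x) := by simp
    simp only [hfi]
    rcases (hx.1 i).eq_or_lt with hi | hi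
    · simp [hi, hact i hi]
    · have hcont : Continuous fun t : ℝ ↦ f i x + t * (f i y - f i x) := by fun_prop
      exact (hcont.tendsto' 0 _ (by simp)).eventually (eventually_lt_nhds hi) |>.mono
        fun _ ↦ le_of_lt
  have hline' := (continuous_neg.tendsto' (0 : ℝ) 0 neg_zero).eventually hline
  obtain ⟨t, ⟨hpos, hneg⟩, ht : 0 < t⟩ :=
    ((hline.and hline').filter_mono nhdsWithin_le_nhds |>.and
      (self_mem_nhdsWithin (s := Ioi (0 : ℝ)))).exists
  have hmid : x ∈ openSegment ℝ (x + t • (y - x)) (x + (-t) • (y - x)) :=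
    ⟨1 / 2, 1 / 2, by norm_num, by norm_num, by norm_num, by module⟩
  have htd : t • (y - x) = 0 := by simpa using hx.2 hpos hneg hmid
  simpa [sub_eq_zero, ht.ne'] using htd

theorem finite_extremePoints_setOf_forall_le [Finite ι] :
    (extremePoints ℝ {x | ∀ i, f i x ≤ b i}).Finite := by
  refine Finite.of_finite_image (f := fun x ↦ {i | f i x = b i}) (toFinite _) ?_
  intro x hx y _ hxy
  exact (eq_of_mem_extremePoints_setOf_forall_le f b hx fun i hi ↦
    (Set.ext_iff.1 hxy i).1 hi).symm

end Polyhedron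

theorem convexHull_extremePoints_eq_of_finite {E : Type*} [AddCommGroup E] [Module ℝ E]
    [TopologicalSpace E] [T2Space E] [IsTopologicalAddGroup E] [ContinuousSMul ℝ E]
    [LocallyConvexSpace ℝ E] {s : Set E} (hs : IsCompact s) (hconv : Convex ℝ s)
    (hfin : (extremePoints ℝ s).Finite) : convexHull ℝ (extremePoints ℝ s) = s := by
  simpa only [(hfin.isCompact_convexHull (𝕜 := ℝ)).isClosed.closure_eq] using
    closure_convexHull_extremePoints hs hconv

theorem convexHull_extremePoints_setOf_forall_le {ι E : Type*} [Finite ι] [NormedAddCommGroup E]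
    [NormedSpace ℝ E] [FiniteDimensional ℝ E] (f : ι → E →ₗ[ℝ] ℝ) (b : ι → ℝ)
    (hbdd : Bornology.IsBounded {x | ∀ i, f i x ≤ b i}) :
    convexHull ℝ (extremePoints ℝ {x | ∀ i, f i x ≤ b i}) = {x | ∀ i, f i x ≤ b i} := by
  have hclosed : IsClosed {x | ∀ i, f i x ≤ b i} := by
    simpa only [ofPred_forall] using isClosed_iInter fun i ↦
      isClosed_le (f i).continuous_of_finiteDimensional continuous_const
  exact convexHull_extremePoints_eq_of_finite (Metric.isCompact_of_isClosed_isBounded hclosed hbdd)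
    (convex_setOf_forall_le f b) (finite_extremePoints_setOf_forall_le f b)

theorem exists_nonneg_weights_of_mem_convexHull_range {ι E : Type*} [Fintype ι] [AddCommGroup E]
    [Module ℝ E] {u : ι → E} {x : E} (hx : x ∈ convexHull ℝ (range u)) :
    ∃ w : ι → ℝ, (∀ i, 0 ≤ w i) ∧ ∑ i, w i = 1 ∧ ∑ i, w i • u i = x := by
  classical
  rw [convexHull_range_eq_exists_affineCombination] at hx
  obtain ⟨s, w, hw₀, hw₁, rfl⟩ := hx
  refine ⟨fun i ↦ if i ∈ s then w i else 0, fun i ↦ ?_, ?_, ?_⟩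
  · dsimp only
    split_ifs with hi
    exacts [hw₀ i hi, le_rfl]
  · rwa [Finset.sum_ite_mem, Finset.univ_inter]
  · simp_rw [ite_smul, zero_smul, Finset.sum_ite_mem, Finset.univ_inter]
    rw [s.affineCombination_eq_linear_combination u w hw₁]

/-- Pushing `x` slightly away from the centroid `c` keeps it in the hull; writing the pushed point
as a convex combination and mixing `c` back in makes every weight positive. -/
theorem exists_pos_weights_of_mem_interior_convexHull_range {ι E : Type*} [Fintype ι]
    [AddCommGroup E] [Module ℝ E] [TopologicalSpace E] [ContinuousAdd E] [ContinuousSMul ℝ E]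
    {u : ι → E} {x : E} (hx : x ∈ interior (convexHull ℝ (range u))) :
    ∃ w : ι → ℝ, (∀ i, 0 < w i) ∧ ∑ i, w i = 1 ∧ ∑ i, w i • u i = x := by
  have hn : 0 < (Fintype.card ι : ℝ) := by
    obtain ⟨_, ⟨i, -⟩⟩ := convexHull_nonempty_iff.1 ⟨x, interior_subset hx⟩
    exact_mod_cast Fintype.card_pos_iff.2 ⟨i⟩
  set c : E := (Fintype.card ι : ℝ)⁻¹ • ∑ i, u i
  have hpush : ∀ᶠ ε in 𝓝 (0 : ℝ), x + ε • (x - c) ∈ convexHull ℝ (range u) := by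
    have hcont : Continuous fun ε : ℝ ↦ x + ε • (x - c) := by fun_prop
    exact (hcont.tendsto' 0 x (by simp)).eventually (mem_interior_iff_mem_nhds.1 hx)
  obtain ⟨ε, hε, hε₀ : 0 < ε⟩ :=
    (hpush.filter_mono nhdsWithin_le_nhds |>.and (self_mem_nhdsWithin (s := Ioi (0 : ℝ)))).exists
  obtain ⟨μ, hμ₀, hμ₁, hμx⟩ := exists_nonneg_weights_of_mem_convexHull_range hε
  refine ⟨fun i ↦ (μ i + ε / Fintype.card ι) / (1 + ε), fun i ↦ by have := hμ₀ i; positivity,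
    ?_, ?_⟩
  · rw [← Finset.sum_div, Finset.sum_add_distrib, hμ₁, Finset.sum_const, Finset.card_univ,
      nsmul_eq_mul]
    field_simp
  · calc ∑ i, ((μ i + ε / Fintype.card ι) / (1 + ε)) • u i
          = (1 + ε)⁻¹ • (∑ i, μ i • u i + ε • c) := by
            simp only [c, Finset.smul_sum, ← Finset.sum_add_distrib]
            exact Finset.sum_congr rfl fun i _ ↦ by module
        _ = (1 + ε)⁻¹ • ((1 + ε) • x) := by rw [hμx]; module
        _ = x := inv_smul_smul₀ (by positivity) x

theorem affineIndependent_prod_sumElim_single {ι₁ ι₂ E : Type*} [Fintype ι₁] [Fintype ι₂]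
    [DecidableEq ι₂] [AddCommGroup E] [Module ℝ E] {u : ι₁ ⊕ ι₂ → E}
    (hu : AffineIndependent ℝ (u ∘ Sum.inl)) :
    AffineIndependent ℝ fun k ↦ ((u k, Sum.elim 0 (fun j ↦ Pi.single j 1) k) : E × (ι₂ → ℝ)) := by
  rw [affineIndependent_iff_of_fintype]
  intro c hc₀ hc
  rw [Finset.weightedVSub_eq_linear_combination _ hc₀, Fintype.sum_sum_type] at hc
  have hinr : ∀ j, c (Sum.inr j) = 0 := fun j ↦ by
    simpa [Prod.snd_sum, Finset.sum_apply, Pi.single_apply] using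
      congr_fun (congr_arg Prod.snd hc) j
  have hc₀' : ∑ i, c (Sum.inl i) = 0 := by simpa [Fintype.sum_sum_type, hinr] using hc₀
  have hinl : ∀ i, c (Sum.inl i) = 0 := by
    refine (affineIndependent_iff_of_fintype ℝ _).1 hu (c ∘ Sum.inl) hc₀' ?_
    rw [Finset.weightedVSub_eq_linear_combination (w := c ∘ Sum.inl) _ hc₀']
    simpa [Prod.fst_sum, hinr] using congr_arg Prod.fst hc
  rintro (i | j)
  exacts [hinl i, hinr j]

theorem exists_affineIndependent_lift {ι₁ ι₂ E : Type*} [Fintype ι₁] [Fintype ι₂]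
    [AddCommGroup E] [Module ℝ E] {u : ι₁ ⊕ ι₂ → E} (hu : AffineIndependent ℝ (u ∘ Sum.inl))
    {w : ι₁ ⊕ ι₂ → ℝ} (hw₁ : ∑ k, w k = 1) (hw₀ : ∑ k, w k • u k = 0) :
    ∃ q : ι₁ ⊕ ι₂ → E × (ι₂ → ℝ),
      AffineIndependent ℝ q ∧ Prod.fst ∘ q = u ∧ ∑ k, w k • q k = 0 := by
  classical
  set q₀ : ι₁ ⊕ ι₂ → E × (ι₂ → ℝ) := fun k ↦ (u k, Sum.elim 0 (fun j ↦ Pi.single j 1) k)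
  have hq₀ : ∑ k, w k • q₀ k = (0, w ∘ Sum.inr) := by
    ext
    · simpa [q₀, Prod.fst_sum] using hw₀
    · simp [q₀, Prod.snd_sum, Fintype.sum_sum_type, Finset.sum_apply, Pi.single_apply]
  refine ⟨-((0 : E), w ∘ Sum.inr) +ᵥ q₀, (affineIndependent_prod_sumElim_single hu).vadd,
    by ext; simp [q₀], ?_⟩
  simp only [Pi.vadd_apply, vadd_eq_add, smul_add, Finset.sum_add_distrib, ← Finset.sum_smul, hw₁,
    one_smul, hq₀, neg_add_cancel]

def finAppendLinearEquiv (g N : ℕ) : ((Fin g → ℝ) × (Fin N → ℝ)) ≃ₗ[ℝ] (Fin (g + N) → ℝ) :=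
  (LinearEquiv.sumArrowLequivProdArrow (Fin g) (Fin N) ℝ ℝ).symm ≪≫ₗ
    LinearEquiv.funCongrLeft ℝ ℝ finSumFinEquiv.symm

@[simp]
theorem finAppendLinearEquiv_apply_castAdd {g N : ℕ} (z : (Fin g → ℝ) × (Fin N → ℝ)) (i : Fin g) :
    finAppendLinearEquiv g N z (Fin.castAdd N i) = z.1 i := by
  obtain ⟨x, y⟩ := z
  simp [finAppendLinearEquiv]

theorem AffineIndependent.sum_smul_mem_interior_convexHull {ι V : Type*} [Fintype ι]
    [NormedAddCommGroup V] [NormedSpace ℝ V] [FiniteDimensional ℝ V] {p : ι → V}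
    (hp : AffineIndependent ℝ p) (hcard : Fintype.card ι = finrank ℝ V + 1) {w : ι → ℝ}
    (hw : ∀ i, 0 < w i) (hw₁ : ∑ i, w i = 1) :
    ∑ i, w i • p i ∈ interior (convexHull ℝ (range p)) := by
  let B : AffineBasis ι ℝ V := ⟨p, hp, hp.affineSpan_eq_top_iff_card_eq_finrank_add_one.2 hcard⟩
  change _ ∈ interior (convexHull ℝ (range B))
  rw [B.interior_convexHull]
  intro i
  rw [← Finset.univ.affineCombination_eq_linear_combination _ _ hw₁]
  exact (B.coord_apply_combination_of_mem (Finset.mem_univ i) hw₁).symm ▸ hw i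

theorem exists_simplex_image_eq_convexHull {g N : ℕ} (v : Fin N → Fin g → ℝ)
    (h0 : (0 : Fin g → ℝ) ∈ interior (convexHull ℝ (range v))) :
    ∃ p : Fin (g + N + 1) → Fin (g + N) → ℝ, AffineIndependent ℝ p ∧
      (0 : Fin (g + N) → ℝ) ∈ interior (convexHull ℝ (range p)) ∧
      (fun x : Fin (g + N) → ℝ ↦ fun i : Fin g ↦ x (Fin.castAdd N i)) ''
        convexHull ℝ (range p) = convexHull ℝ (range v) := by
  obtain ⟨b, -, hbv⟩ := exists_mem_interior_convexHull_affineBasis (mem_interior_iff_mem_nhds.1 h0)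
  have hu : convexHull ℝ (range (Sum.elim b v)) = convexHull ℝ (range v) := by
    rw [Sum.elim_range]
    refine (convexHull_min ?_ (convex_convexHull ℝ _)).antisymm (convexHull_mono subset_union_right)
    exact union_subset ((subset_convexHull ℝ _).trans hbv) (subset_convexHull ℝ _)
  obtain ⟨w, hw, hw₁, hw₀⟩ := exists_pos_weights_of_mem_interior_convexHull_range (hu ▸ h0)
  obtain ⟨q, hq, hqu, hq₀⟩ := exists_affineIndependent_lift (u := Sum.elim b v) b.ind hw₁ hw₀
  set L := finAppendLinearEquiv g N
  have hLq : AffineIndependent ℝ (L ∘ q) := hq.map' L.toLinearMap.toAffineMap L.injective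
  have hcard : Fintype.card (Fin (finrank ℝ (Fin g → ℝ) + 1) ⊕ Fin N) = g + N + 1 := by
    simp only [Fintype.card_sum, Fintype.card_fin, finrank_fin_fun]
    omega
  let e := Fintype.equivFinOfCardEq hcard
  refine ⟨(L ∘ q) ∘ e.symm, hLq.comp_embedding e.symm.toEmbedding, ?_, ?_⟩
  · rw [e.symm.surjective.range_comp]
    simpa [← map_smul, ← map_sum, hq₀] using
      hLq.sum_smul_mem_interior_convexHull (by simpa using hcard) hw hw₁
  · have hπ : (fun x : Fin (g + N) → ℝ ↦ fun i : Fin g ↦ x (Fin.castAdd N i)) =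
        LinearMap.funLeft ℝ ℝ (Fin.castAdd N) := rfl
    rw [e.symm.surjective.range_comp, ← hu, ← hqu, hπ, LinearMap.image_convexHull, ← range_comp]
    congr 2
    ext k i
    simp [L]

/-- Every bounded polyhedron in `ℝ^g` containing `0` in its interior is the coordinate
projection of a simplex (the convex hull of `h+1` affinely independent points in `ℝ^h`)
containing `0` in its interior. -/
theorem bounded_polyhedron_is_projection_of_simplex (g : ℕ) (K : Set (Fin g → ℝ))
    (hpoly : ∃ (m : ℕ) (a : Fin m → Fin g → ℝ) (b : Fin m → ℝ),
      K = {x | ∀ i, ∑ j, a i j * x j ≤ b i})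
    (hbdd : Bornology.IsBounded K)
    (hint : (0 : Fin g → ℝ) ∈ interior K) :
    ∃ (h : ℕ) (hgh : g ≤ h) (p : Fin (h + 1) → Fin h → ℝ),
      AffineIndependent ℝ p ∧
      (0 : Fin h → ℝ) ∈ interior (convexHull ℝ (Set.range p)) ∧
      K = (fun x : Fin h → ℝ => fun i : Fin g => x (Fin.castLE hgh i)) ''
        (convexHull ℝ (Set.range p)) := by
  obtain ⟨m, a, b, hKab⟩ := hpoly
  let f : Fin m → (Fin g → ℝ) →ₗ[ℝ] ℝ := fun i ↦ LinearMap.proj i ∘ₗ (Matrix.of a).mulVecLin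
  have hKf : K = {x | ∀ i, f i x ≤ b i} := hKab
  obtain ⟨N, v, -, hv⟩ := (finite_extremePoints_setOf_forall_le f b).fin_param
  have hK : convexHull ℝ (range v) = K := by
    rw [hv, hKf]
    exact convexHull_extremePoints_setOf_forall_le f b (hKf ▸ hbdd)
  obtain ⟨p, hp, hp0, hpK⟩ := exists_simplex_image_eq_convexHull v (hK ▸ hint)
  exact ⟨g + N, Nat.le_add_right g N, p, hp, hp0, hK ▸ hpK.symm⟩
end

section
/- Let X be an element of a closed bounded matrix convex set K of g-tuples of self-adjoint matrices such that X is maximal, i.e., X admits only trivial dilations in K (every dilation of X in K is of the form X ⊕ Z). If X = X' ⊕ X'' is a direct sum decomposition along a reducing subspace, then both summands X' and X'' admit only trivial dilations in K. -/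
open Matrix

/-- The tuple `X ∈ K(p)` admits only trivial one-block dilations in `K`: any
`Y = [[X, B],[C, D]] ∈ K(p+m)` has `B = 0` and `C = 0`. -/
def OnlyTrivialDilations (g : ℕ) (K : ∀ n : ℕ, Set (Fin g → Matrix (Fin n) (Fin n) ℂ))
    (p : ℕ) (X : Fin g → Matrix (Fin p) (Fin p) ℂ) : Prop :=
  ∀ (m : ℕ) (B : Fin g → Matrix (Fin p) (Fin m) ℂ)
    (C : Fin g → Matrix (Fin m) (Fin p) ℂ) (D : Fin g → Matrix (Fin m) (Fin m) ℂ),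
    (fun j => Matrix.reindex finSumFinEquiv finSumFinEquiv
      (Matrix.fromBlocks (X j) (B j) (C j) (D j))) ∈ K (p + m) →
    ∀ j, B j = 0 ∧ C j = 0

section ArvAux
def ArvEmb {a N : ℕ} (f : Fin a → Fin N) : Matrix (Fin a) (Fin N) ℂ :=
  Matrix.of fun x i => if f x = i then 1 else 0

lemma ArvEmb_mul_mul {a N : ℕ} (f : Fin a → Fin N) (M : Matrix (Fin N) (Fin N) ℂ) :
    ArvEmb f * M * (ArvEmb f)ᴴ = M.submatrix f f := by
  ext x y
  simp [ArvEmb, Matrix.mul_apply, Matrix.conjTranspose_apply,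
    apply_ite (starRingEnd ℂ), ite_mul, mul_ite, Finset.sum_ite_eq]

lemma ArvEmb_mul_conjTranspose {a N : ℕ} {f : Fin a → Fin N} (hf : Function.Injective f) :
    ArvEmb f * (ArvEmb f)ᴴ = 1 := by
  have := ArvEmb_mul_mul f 1
  rw [Matrix.mul_one] at this
  rw [this]
  ext x y
  simp [Matrix.one_apply, hf.eq_iff]

lemma ArvEmb_sum_partition {a b N : ℕ} (e : Fin a ⊕ Fin b ≃ Fin N) :
    (ArvEmb fun x => e (Sum.inl x))ᴴ * (ArvEmb fun x => e (Sum.inl x))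
      + (ArvEmb fun x => e (Sum.inr x))ᴴ * (ArvEmb fun x => e (Sum.inr x)) = 1 := by
  ext i j
  have h : ∀ (c : ℕ) (f : Fin c → Fin N),
      ((ArvEmb f)ᴴ * ArvEmb f) i j = ∑ x, if f x = i ∧ f x = j then (1:ℂ) else 0 := by
    intro c f
    simp only [Matrix.mul_apply, Matrix.conjTranspose_apply, ArvEmb, Matrix.of_apply,
      apply_ite (starRingEnd ℂ), _root_.map_one, _root_.map_zero]
    refine Finset.sum_congr rfl fun x _ => ?_
    by_cases h1 : f x = i <;> by_cases h2 : f x = j <;> simp [h1, h2]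
  rw [Matrix.add_apply, h, h]
  have h2 : (∑ x : Fin a, if e (Sum.inl x) = i ∧ e (Sum.inl x) = j then (1:ℂ) else 0)
       + (∑ x : Fin b, if e (Sum.inr x) = i ∧ e (Sum.inr x) = j then (1:ℂ) else 0)
       = ∑ s : Fin a ⊕ Fin b, if e s = i ∧ e s = j then (1:ℂ) else 0 :=
    (Fintype.sum_sum_type (fun s => if e s = i ∧ e s = j then (1:ℂ) else 0)).symm
  rw [h2, Equiv.sum_comp e (fun t => if t = i ∧ t = j then (1:ℂ) else 0)]
  by_cases hij : i = j
  · subst hij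
    simp [Matrix.one_apply, Finset.sum_ite_eq']
  · rw [Finset.sum_eq_zero, Matrix.one_apply_ne hij]
    intro t _
    simp only [ite_eq_right_iff, and_imp]
    rintro rfl rfl; exact absurd rfl hij

lemma ArvEmb_scatter {a b N : ℕ} (e : Fin a ⊕ Fin b ≃ Fin N)
    (M : Matrix (Fin a) (Fin a) ℂ) (M' : Matrix (Fin b) (Fin b) ℂ) :
    (ArvEmb fun x => e (Sum.inl x))ᴴ * M * (ArvEmb fun x => e (Sum.inl x))
      + (ArvEmb fun x => e (Sum.inr x))ᴴ * M' * (ArvEmb fun x => e (Sum.inr x))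
      = Matrix.reindex e e (Matrix.fromBlocks M 0 0 M') := by
  ext i j
  obtain ⟨s, rfl⟩ := e.surjective i
  obtain ⟨t, rfl⟩ := e.surjective j
  cases s <;> cases t <;>
    simp [ArvEmb, Matrix.mul_apply, Matrix.conjTranspose_apply,
      apply_ite (starRingEnd ℂ), ite_mul, mul_ite, Finset.sum_ite_eq, Finset.sum_ite_eq',
      Matrix.reindex_apply, Matrix.submatrix_apply]

lemma arv_key {g N a b : ℕ} {K : ∀ n : ℕ, Set (Fin g → Matrix (Fin n) (Fin n) ℂ)}
    (hcvx : IsMatrixConvex g K) (e : Fin a ⊕ Fin b ≃ Fin N)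
    (A : Fin g → Matrix (Fin a) (Fin a) ℂ) (Bb : Fin g → Matrix (Fin b) (Fin b) ℂ)
    (XN : Fin g → Matrix (Fin N) (Fin N) ℂ)
    (hXN : ∀ j, XN j = Matrix.reindex e e (Matrix.fromBlocks (A j) 0 0 (Bb j)))
    (hmem : XN ∈ K N)
    (hext : OnlyTrivialDilations g K N XN) :
    OnlyTrivialDilations g K a A := by
  intro m B C D hY
  -- Step A : Bb ∈ K b
  have hBb : Bb ∈ K b := by
    have h1 := hcvx b 1 (fun _ => N) (fun _ => XN) (fun _ => (ArvEmb fun x => e (Sum.inr x))ᴴ)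
      (fun _ => hmem)
      (by
        rw [Fin.sum_univ_one, Matrix.conjTranspose_conjTranspose]
        exact ArvEmb_mul_conjTranspose (e.injective.comp Sum.inr_injective))
    have h2 : (fun j => ∑ i : Fin 1,
        ((ArvEmb fun x => e (Sum.inr x))ᴴ)ᴴ * XN j * (ArvEmb fun x => e (Sum.inr x))ᴴ) = Bb := by
      funext j
      rw [Fin.sum_univ_one, Matrix.conjTranspose_conjTranspose, ArvEmb_mul_mul]
      ext x y
      simp [hXN j, Matrix.reindex_apply, Matrix.submatrix_apply]
    rwa [h2] at h1
  -- the big equivalence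
  let G : Fin (a + m) ⊕ Fin b ≃ Fin (N + m) :=
    ((finSumFinEquiv.symm.sumCongr (Equiv.refl (Fin b))).trans <|
      (Equiv.sumAssoc (Fin a) (Fin m) (Fin b)).trans <|
      ((Equiv.refl (Fin a)).sumCongr (Equiv.sumComm (Fin m) (Fin b))).trans <|
      (Equiv.sumAssoc (Fin a) (Fin b) (Fin m)).symm.trans <|
      (e.sumCongr (Equiv.refl (Fin m))).trans finSumFinEquiv)
  set Y : Fin g → Matrix (Fin (a + m)) (Fin (a + m)) ℂ :=
    fun j => Matrix.reindex finSumFinEquiv finSumFinEquiv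
      (Matrix.fromBlocks (A j) (B j) (C j) (D j)) with hYdef
  set Bt : Fin g → Matrix (Fin N) (Fin m) ℂ :=
    fun j => Matrix.of fun i c => Sum.elim (fun a0 => B j a0 c) (fun _ => 0) (e.symm i) with hBt
  set Ct : Fin g → Matrix (Fin m) (Fin N) ℂ :=
    fun j => Matrix.of fun c i => Sum.elim (fun a0 => C j c a0) (fun _ => 0) (e.symm i) with hCt
  have hT := hcvx (N + m) 2 ![a + m, b]
    (Fin.cons Y (Fin.cons Bb (fun i0 => i0.elim0)))
    (Fin.cons (ArvEmb fun x => G (Sum.inl x)) (Fin.cons (ArvEmb fun x => G (Sum.inr x)) (fun i0 => i0.elim0)))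
    (by
      intro i
      refine Fin.cases ?_ (fun i' => Fin.cases ?_ (fun i'' => i''.elim0) i') i
      · exact hY
      · exact hBb)
    (by rw [Fin.sum_univ_two]; exact ArvEmb_sum_partition G)
  rw [show (fun j => ∑ i : Fin 2,
      ((Fin.cons (ArvEmb fun x => G (Sum.inl x)) (Fin.cons (ArvEmb fun x => G (Sum.inr x)) (fun i0 => i0.elim0)) : ∀ i : Fin 2, Matrix (Fin (![a+m,b] i)) (Fin (N+m)) ℂ) i)ᴴ
        * (Fin.cons Y (Fin.cons Bb (fun i0 => i0.elim0)) : ∀ i : Fin 2, Fin g → Matrix (Fin (![a+m,b] i)) (Fin (![a+m,b] i)) ℂ) i j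
        * (Fin.cons (ArvEmb fun x => G (Sum.inl x)) (Fin.cons (ArvEmb fun x => G (Sum.inr x)) (fun i0 => i0.elim0)) : ∀ i : Fin 2, Matrix (Fin (![a+m,b] i)) (Fin (N+m)) ℂ) i)
      = fun j => Matrix.reindex finSumFinEquiv finSumFinEquiv
          (Matrix.fromBlocks (XN j) (Bt j) (Ct j) (D j)) from ?_] at hT
  · -- apply extremality
    have hBC := hext m Bt Ct D hT
    intro j
    constructor
    · ext a0 c
      have := congrFun (congrFun ((hBC j).1) (e (Sum.inl a0))) c
      simpa [hBt] using this
    · ext c a0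
      have := congrFun (congrFun ((hBC j).2) c) (e (Sum.inl a0))
      simpa [hCt] using this
  · funext j
    rw [Fin.sum_univ_two]
    show (ArvEmb fun x => G (Sum.inl x))ᴴ * Y j * (ArvEmb fun x => G (Sum.inl x))
        + (ArvEmb fun x => G (Sum.inr x))ᴴ * Bb j * (ArvEmb fun x => G (Sum.inr x)) = _
    rw [ArvEmb_scatter G (Y j) (Bb j)]
    ext i j'
    obtain ⟨s, rfl⟩ := G.surjective i
    obtain ⟨t, rfl⟩ := G.surjective j'
    rw [Matrix.reindex_apply, Matrix.submatrix_apply, Equiv.symm_apply_apply,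
      Equiv.symm_apply_apply]
    have hGl : ∀ p : Fin a ⊕ Fin m, G (Sum.inl (finSumFinEquiv p))
        = finSumFinEquiv (Sum.map (fun a0 => e (Sum.inl a0)) id p) := by
      rintro (a0 | c) <;> simp [G]
    have hGr : ∀ b0 : Fin b, G (Sum.inr b0) = finSumFinEquiv (Sum.inl (e (Sum.inr b0))) := by
      intro b0; simp [G]
    rcases s with x | b0
    · obtain ⟨p, rfl⟩ := finSumFinEquiv.surjective x
      rcases t with y | b1
      · obtain ⟨q, rfl⟩ := finSumFinEquiv.surjective y
        rw [Matrix.reindex_apply, Matrix.submatrix_apply, hGl, hGl,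
          Equiv.symm_apply_apply, Equiv.symm_apply_apply]
        rcases p with a0 | c <;> rcases q with a1 | c1 <;>
          simp [hYdef, hXN, hBt, hCt, Matrix.reindex_apply, Matrix.submatrix_apply]
      · rw [Matrix.reindex_apply, Matrix.submatrix_apply, hGl, hGr,
          Equiv.symm_apply_apply, Equiv.symm_apply_apply]
        rcases p with a0 | c <;>
          simp [hYdef, hXN, hBt, hCt, Matrix.reindex_apply, Matrix.submatrix_apply]
    · rcases t with y | b1
      · obtain ⟨q, rfl⟩ := finSumFinEquiv.surjective y
        rw [Matrix.reindex_apply, Matrix.submatrix_apply, hGr, hGl,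
          Equiv.symm_apply_apply, Equiv.symm_apply_apply]
        rcases q with a1 | c1 <;>
          simp [hYdef, hXN, hBt, hCt, Matrix.reindex_apply, Matrix.submatrix_apply]
      · rw [Matrix.reindex_apply, Matrix.submatrix_apply, hGr, hGr,
          Equiv.symm_apply_apply, Equiv.symm_apply_apply]
        simp [hXN, hBt, hCt, Matrix.reindex_apply, Matrix.submatrix_apply]
end ArvAux

/-- If a direct sum `X = X' ⊕ X''` in a closed bounded matrix convex set admits only
trivial dilations (is Arveson extreme), then both summands `X'` and `X''` admit only
trivial dilations in `K`. -/
theorem summands_of_arveson_extreme_are_extreme (g n' n'' : ℕ)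
    (K : ∀ n : ℕ, Set (Fin g → Matrix (Fin n) (Fin n) ℂ))
    (hcvx : IsMatrixConvex g K)
    (hclosed : ∀ n, IsClosed (K n))
    (hbdd : ∀ n, ∃ C : ℝ, ∀ X ∈ K n, ∀ j a b, ‖X j a b‖ ≤ C)
    (X' : Fin g → Matrix (Fin n') (Fin n') ℂ)
    (X'' : Fin g → Matrix (Fin n'') (Fin n'') ℂ)
    (X : Fin g → Matrix (Fin (n' + n'')) (Fin (n' + n'')) ℂ)
    (hXdef : X = fun j => Matrix.reindex finSumFinEquiv finSumFinEquiv
      (Matrix.fromBlocks (X' j) 0 0 (X'' j)))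
    (hXmem : X ∈ K (n' + n''))
    (hXext : OnlyTrivialDilations g K (n' + n'') X) :
    OnlyTrivialDilations g K n' X' ∧ OnlyTrivialDilations g K n'' X'' := by
  constructor
  · exact arv_key hcvx finSumFinEquiv X' X'' X (fun j => congrFun hXdef j) hXmem hXext
  · refine arv_key hcvx ((Equiv.sumComm (Fin n'') (Fin n')).trans finSumFinEquiv)
      X'' X' X ?_ hXmem hXext
    intro j
    ext i k
    obtain ⟨s, rfl⟩ := ((Equiv.sumComm (Fin n'') (Fin n')).trans finSumFinEquiv).surjective i
    obtain ⟨t, rfl⟩ := ((Equiv.sumComm (Fin n'') (Fin n')).trans finSumFinEquiv).surjective k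
    cases s <;> cases t <;>
      simp [hXdef, Matrix.reindex_apply, Matrix.submatrix_apply, Equiv.sumComm]
end
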